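/- There is an absolute positive constant C such that the following holds. If u_1 n + v_1, ..., u_s n + v_s are s ≥ 5 pairwise distinct linear functions with integer coefficients satisfying gcd(u_i, v_i) = 1 and u_i ≥ 1 for all 1 ≤ i ≤ s, then there is a subset S ⊆ {1, ..., s} with #S ≥ C·s/log s such that {u_i n + v_i : i ∈ S} is an admissible set of linear functions. -/

import Mathlib

/-!
For a prime `p`, since `gcd(u, v) = 1` the form `u n + v` vanishes modulo `p` on at most one
residue class, so some class `m` is a root of at most `#S / p` of the forms in `S`. Sieving
greedily by the primes `p ≤ s`, and discarding at each `p` the forms vanishing at the best class,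
leaves at least `s ∏_{p ≤ s} (1 - 1/p) ≫ s / log s` forms by Mertens' theorem (proved here from
Chebyshev's bound `θ(N) ≤ N log 4`). They are admissible at every `p ≤ s` by construction, and at
`p > s` because then `#S < p`, so the best class is a root of none of them.
-/

open Finset Real
open Nat (primesLE)
open scoped Nat

lemma sum_div_mul_log_le_log_factorial (N : ℕ) :
    ∑ p ∈ primesLE N, ((N / p : ℕ) : ℝ) * log p ≤ log (N ! : ℝ) := by
  have hsupp : (N !).factorization.support ⊆ primesLE N := fun p hp ↦ by
    rw [Nat.support_factorization, Nat.mem_primeFactors] at hp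
    exact Nat.mem_primesLE.2 ⟨(hp.1.dvd_factorial).1 hp.2.1, hp.1⟩
  rw [log_nat_eq_sum_factorization, Finsupp.sum_of_support_subset _ hsupp _ (by simp)]
  refine sum_le_sum fun p hp ↦ ?_
  have hp := Nat.prime_of_mem_primesLE hp
  have hdiv : N / p ≤ (N !).factorization p := calc
    N / p ≤ (p * (N / p))!.factorization p := by rw [Nat.factorization_factorial_mul hp]; omega
    _ ≤ (N !).factorization p :=
      (Nat.factorization_le_iff_dvd (Nat.factorial_ne_zero _) (Nat.factorial_ne_zero _)).2
        (Nat.factorial_dvd_factorial (Nat.mul_div_le N p)) p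
  gcongr

theorem sum_log_div_primesLE_le {N : ℕ} (hN : 0 < N) :
    ∑ p ∈ primesLE N, log p / p ≤ log N + log 4 := by
  have hNR : (0 : ℝ) < N := by exact_mod_cast hN
  have hfloor : ∀ p ∈ primesLE N,
      (N : ℝ) / p * log p ≤ ((N / p : ℕ) : ℝ) * log p + log p :=
    fun p _ ↦ by
      have := Nat.lt_floor_add_one ((N : ℝ) / p)
      rw [Nat.floor_div_eq_div] at this
      nlinarith [log_natCast_nonneg p]
  have hfact : log (N ! : ℝ) ≤ N * log N := by
    rw [← log_pow]
    exact log_le_log (by positivity) (by exact_mod_cast Nat.factorial_le_pow N)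
  have htheta := Chebyshev.theta_le_log4_mul_x (Nat.cast_nonneg (α := ℝ) N)
  rw [Chebyshev.theta_eq_sum_primesLE_log] at htheta
  refine le_of_mul_le_mul_left ?_ hNR
  calc (N : ℝ) * ∑ p ∈ primesLE N, log p / p
        = ∑ p ∈ primesLE N, (N : ℝ) / p * log p := by
        rw [mul_sum]; congr! 1; ring
    _ ≤ ∑ p ∈ primesLE N, ((N / p : ℕ) : ℝ) * log p + ∑ p ∈ primesLE N, log p := by
        rw [← sum_add_distrib]; exact sum_le_sum hfloor
    _ ≤ log (N ! : ℝ) + log 4 * N := add_le_add (sum_div_mul_log_le_log_factorial N) htheta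
    _ ≤ N * (log N + log 4) := by linarith

lemma sum_primesLE_succ {M : Type*} [AddCommMonoid M] (f : ℕ → M) (n : ℕ) :
    ∑ p ∈ primesLE (n + 1), f p
      = ∑ p ∈ primesLE n, f p + if (n + 1).Prime then f (n + 1) else 0 := by
  rw [Nat.primesLE_succ]
  split_ifs
  · rw [sum_insert fun h ↦ by simpa using Nat.le_of_mem_primesLE h, add_comm]
  · rw [add_zero]

/-- Abel summation of `log p / p` against `1 / log p`, run as an induction on `n`; the middle term
is the boundary term. -/
lemma sum_inv_primesLE_le_aux {n : ℕ} (hn : 2 ≤ n) :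
    ∑ p ∈ primesLE n, 1 / (p : ℝ)
      ≤ log (log n) + (∑ p ∈ primesLE n, log p / p - log 4) / log n + 3 := by
  induction n, hn using Nat.le_induction with
  | base =>
    have hprimes : primesLE 2 = {2} := by decide
    have hlog2 : 1 / 2 < log 2 := by linarith [log_two_gt_d9]
    have hloglog2 := one_sub_inv_le_log_of_pos (x := log 2) (by linarith)
    have hinv : (log 2)⁻¹ < 2 := by rw [inv_lt_comm₀ (by linarith) two_pos]; linarith
    have hlog4 : log 4 = 2 * log 2 := by
      rw [show (4 : ℝ) = 2 ^ 2 by norm_num, log_pow]; norm_num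
    simp only [hprimes, sum_singleton, Nat.cast_ofNat, hlog4]
    rw [show (log 2 / 2 - 2 * log 2) / log 2 = -3 / 2 by field_simp; ring]
    linarith
  | succ n hn ih =>
    set L := log n
    set L' := log (n + 1 : ℕ)
    set A := ∑ p ∈ primesLE n, log p / p
    set x : ℝ := if (n + 1).Prime then 1 / (n + 1 : ℕ) else 0
    have hL : 0 < L := log_pos (by exact_mod_cast hn)
    have hL' : 0 < L' := log_pos (by exact_mod_cast (by omega : 1 < n + 1))
    have hLL' : L ≤ L' := log_le_log (by positivity) (by exact_mod_cast n.le_succ)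
    have hinv :
        ∑ p ∈ primesLE (n + 1), 1 / (p : ℝ) = ∑ p ∈ primesLE n, 1 / (p : ℝ) + x :=
      sum_primesLE_succ _ n
    have hA : ∑ p ∈ primesLE (n + 1), log p / p = A + x * L' := by
      rw [sum_primesLE_succ]; congr 1; simp only [x, L']; split_ifs <;> ring
    have hstep : (A - log 4) / L - (A - log 4) / L' ≤ log L' - log L := calc
      (A - log 4) / L - (A - log 4) / L' = (A - log 4) * (1 / L - 1 / L') := by ring
      _ ≤ L * (1 / L - 1 / L') :=
        mul_le_mul_of_nonneg_right (by linarith [sum_log_div_primesLE_le (by omega : 0 < n)])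
          (sub_nonneg.2 (one_div_le_one_div_of_le hL hLL'))
      _ = 1 - (L' / L)⁻¹ := by field_simp
      _ ≤ log (L' / L) := one_sub_inv_le_log_of_pos (by positivity)
      _ = log L' - log L := log_div hL'.ne' hL.ne'
    rw [hinv, hA, show (A + x * L' - log 4) / L' = (A - log 4) / L' + x by field_simp; ring]
    linarith

theorem sum_inv_primesLE_le {N : ℕ} (hN : 2 ≤ N) :
    ∑ p ∈ primesLE N, 1 / (p : ℝ) ≤ log (log N) + 4 := by
  have hL : 0 < log (N : ℝ) := log_pos (by exact_mod_cast hN)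
  have := sum_log_div_primesLE_le (by omega : 0 < N)
  have : (∑ p ∈ primesLE N, log p / p - log 4) / log N ≤ 1 :=
    (div_le_one hL).2 (by linarith)
  linarith [sum_inv_primesLE_le_aux hN]

lemma sum_inv_sub_one_primesLE_le {N : ℕ} (hN : 2 ≤ N) :
    ∑ p ∈ primesLE N, 1 / ((p : ℝ) - 1) ≤ log (log N) + 8 := by
  have hsq : ∑ p ∈ primesLE N, 1 / (p : ℝ) ^ 2 ≤ 2 :=
    (sum_le_hasSum _ (fun _ _ ↦ by positivity) hasSum_zeta_two).trans
      (by nlinarith [pi_lt_d2, pi_pos])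
  have hterm : ∀ p ∈ primesLE N, 1 / ((p : ℝ) - 1) ≤ 1 / p + 2 * (1 / (p : ℝ) ^ 2) := by
    intro p hp
    have h2 : (2 : ℝ) ≤ p := by exact_mod_cast Nat.two_le_of_mem_primesLE hp
    rw [div_le_iff₀ (by linarith)]
    field_simp
    nlinarith
  calc ∑ p ∈ primesLE N, 1 / ((p : ℝ) - 1)
      ≤ ∑ p ∈ primesLE N, (1 / p + 2 * (1 / (p : ℝ) ^ 2)) := sum_le_sum hterm
    _ = ∑ p ∈ primesLE N, 1 / (p : ℝ) + 2 * ∑ p ∈ primesLE N, 1 / (p : ℝ) ^ 2 := by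
      rw [sum_add_distrib, mul_sum]
    _ ≤ log (log N) + 8 := by linarith [sum_inv_primesLE_le hN]

theorem exp_neg_div_log_le_prod_one_sub_inv {N : ℕ} (hN : 2 ≤ N) :
    exp (-8) / log N ≤ ∏ p ∈ primesLE N, (1 - 1 / (p : ℝ)) := by
  have hL : 0 < log (N : ℝ) := log_pos (by exact_mod_cast hN)
  have hterm : ∀ p ∈ primesLE N, exp (-(1 / ((p : ℝ) - 1))) ≤ 1 - 1 / p := by
    intro p hp
    have h2 : (2 : ℝ) ≤ p := by exact_mod_cast Nat.two_le_of_mem_primesLE hp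
    have hpos : 0 < 1 - 1 / (p : ℝ) := by
      rw [sub_pos, div_lt_one (by linarith)]; linarith
    rw [exp_neg, inv_le_comm₀ (exp_pos _) hpos]
    calc (1 - 1 / (p : ℝ))⁻¹ = 1 / ((p : ℝ) - 1) + 1 := by
          have : (p : ℝ) - 1 ≠ 0 := by linarith
          field_simp
          ring
      _ ≤ exp (1 / ((p : ℝ) - 1)) := add_one_le_exp _
  calc exp (-8) / log N = exp (-(log (log N) + 8)) := by
        rw [show -(log (log N) + 8) = -8 - log (log N) by ring, exp_sub, exp_log hL]
    _ ≤ exp (-∑ p ∈ primesLE N, 1 / ((p : ℝ) - 1)) :=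
        exp_le_exp.2 (by linarith [sum_inv_sub_one_primesLE_le hN])
    _ = ∏ p ∈ primesLE N, exp (-(1 / ((p : ℝ) - 1))) := by rw [← sum_neg_distrib, exp_sum]
    _ ≤ ∏ p ∈ primesLE N, (1 - 1 / (p : ℝ)) :=
        prod_le_prod (fun _ _ ↦ (exp_pos _).le) hterm

section Sieve

variable {ι : Type*} {p : ℕ}

def AdmissibleAt (S : Finset ι) (u v : ι → ℤ) (p : ℕ) : Prop :=
  ∃ m : ℤ, ¬ (p : ℤ) ∣ ∏ i ∈ S, (u i * m + v i)

lemma AdmissibleAt.mono {S T : Finset ι} {u v : ι → ℤ} (h : AdmissibleAt T u v p)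
    (hST : S ⊆ T) : AdmissibleAt S u v p := by
  obtain ⟨m, hm⟩ := h
  exact ⟨m, fun hS ↦ hm (hS.trans (prod_dvd_prod_of_subset _ _ _ hST))⟩

lemma admissibleAt_filter_not_dvd (hp : p.Prime) (S : Finset ι) (u v : ι → ℤ) (m : ℤ) :
    AdmissibleAt {i ∈ S | ¬ (p : ℤ) ∣ u i * m + v i} u v p := by
  refine ⟨m, fun hdvd ↦ ?_⟩
  obtain ⟨i, hi, hdvd⟩ := ((Nat.prime_iff_prime_int.1 hp).dvd_finsetProd_iff _).1 hdvd
  exact (mem_filter.1 hi).2 hdvd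

lemma card_filter_dvd_mul_add_le_one (hp : p.Prime) {a b : ℤ} (hab : Int.gcd a b = 1) :
    #{m ∈ range p | (p : ℤ) ∣ a * (m : ℕ) + b} ≤ 1 := by
  have hpZ : Prime (p : ℤ) := Nat.prime_iff_prime_int.1 hp
  refine card_le_one.2 fun m hm m' hm' ↦ ?_
  simp only [mem_filter, mem_range] at hm hm'
  have ha : ¬ (p : ℤ) ∣ a := fun ha ↦ by
    have hb : (p : ℤ) ∣ b := (dvd_add_right (ha.mul_right _)).1 hm.2
    have := Int.dvd_coe_gcd ha hb
    rw [hab, Nat.cast_one] at this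
    exact hpZ.not_dvd_one this
  have hdiff := dvd_sub hm.2 hm'.2
  rw [add_sub_add_right_eq_sub, ← mul_sub] at hdiff
  have hmod : (m' : ℤ) ≡ m [ZMOD p] :=
    Int.modEq_iff_dvd.2 ((hpZ.dvd_mul.1 hdiff).resolve_left ha)
  exact (Int.natCast_modEq_iff.1 hmod).symm.eq_of_lt_of_lt hm.1 hm'.1

lemma exists_mul_card_filter_dvd_le (hp : p.Prime) (S : Finset ι) {u v : ι → ℤ}
    (huv : ∀ i ∈ S, Int.gcd (u i) (v i) = 1) :
    ∃ m : ℤ, p * #{i ∈ S | (p : ℤ) ∣ u i * m + v i} ≤ #S := by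
  have hcount : ∑ m ∈ range p, #{i ∈ S | (p : ℤ) ∣ u i * (m : ℕ) + v i} ≤ #S :=
    calc ∑ m ∈ range p, #{i ∈ S | (p : ℤ) ∣ u i * (m : ℕ) + v i}
        = ∑ i ∈ S, #{m ∈ range p | (p : ℤ) ∣ u i * (m : ℕ) + v i} :=
          (sum_card_bipartiteAbove_eq_sum_card_bipartiteBelow _).symm
      _ ≤ ∑ _i ∈ S, 1 := sum_le_sum fun i hi ↦ card_filter_dvd_mul_add_le_one hp (huv i hi)
      _ = #S := (card_eq_sum_ones S).symm
  obtain ⟨m, -, hm⟩ := exists_le_of_sum_le (nonempty_range_iff.2 hp.ne_zero)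
    (f := fun m : ℕ ↦ p * #{i ∈ S | (p : ℤ) ∣ u i * m + v i}) (g := fun _ ↦ #S) (by
      rw [← mul_sum, sum_const, card_range, smul_eq_mul]
      exact Nat.mul_le_mul_left p hcount)
  exact ⟨m, hm⟩

lemma admissibleAt_of_card_lt (hp : p.Prime) {S : Finset ι} (hS : #S < p) {u v : ι → ℤ}
    (huv : ∀ i ∈ S, Int.gcd (u i) (v i) = 1) : AdmissibleAt S u v p := by
  obtain ⟨m, hm⟩ := exists_mul_card_filter_dvd_le hp S huv
  have hbad : {i ∈ S | (p : ℤ) ∣ u i * m + v i} = ∅ := card_eq_zero.1 (by nlinarith)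
  simpa only [filter_true_of_mem (filter_eq_empty_iff.1 hbad)]
    using admissibleAt_filter_not_dvd hp S u v m

/-- Sieve greedily by the primes of `Q`, each time discarding the forms that vanish at the residue
class hitting the fewest of them. -/
theorem exists_large_subset_admissibleAt (T : Finset ι) {u v : ι → ℤ}
    (huv : ∀ i ∈ T, Int.gcd (u i) (v i) = 1) (Q : Finset ℕ) (hQ : ∀ p ∈ Q, p.Prime) :
    ∃ S ⊆ T, (#T : ℝ) * ∏ p ∈ Q, (1 - 1 / (p : ℝ)) ≤ #S ∧
      ∀ p ∈ Q, AdmissibleAt S u v p := by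
  induction Q using Finset.induction_on with
  | empty => exact ⟨T, subset_rfl, by simp, by simp⟩
  | @insert q Q hqQ ih =>
    have hq : q.Prime := hQ q (mem_insert_self q Q)
    obtain ⟨S, hST, hcard, hadm⟩ := ih fun p hp ↦ hQ p (mem_insert_of_mem hp)
    obtain ⟨m, hm⟩ := exists_mul_card_filter_dvd_le hq S fun i hi ↦ huv i (hST hi)
    set bad := {i ∈ S | (q : ℤ) ∣ u i * m + v i}
    set good := {i ∈ S | ¬ (q : ℤ) ∣ u i * m + v i}
    refine ⟨good, (filter_subset _ _).trans hST, ?_, ?_⟩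
    · have hsplit : (#bad : ℝ) + #good = #S := by
        exact_mod_cast card_filter_add_card_filter_not _
      have hqR : (0 : ℝ) < q := by exact_mod_cast hq.pos
      have hbad : (#bad : ℝ) ≤ #S / q := by
        rw [le_div_iff₀ hqR, mul_comm]; exact_mod_cast hm
      have hfac : 0 ≤ 1 - 1 / (q : ℝ) := by
        rw [sub_nonneg, div_le_one hqR]; exact_mod_cast hq.one_le
      calc (#T : ℝ) * ∏ p ∈ insert q Q, (1 - 1 / (p : ℝ))
          = (#T * ∏ p ∈ Q, (1 - 1 / (p : ℝ))) * (1 - 1 / q) := by rw [prod_insert hqQ]; ring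
        _ ≤ #S * (1 - 1 / q) := mul_le_mul_of_nonneg_right hcard hfac
        _ ≤ #good := by rw [mul_sub, mul_one, mul_one_div]; linarith
    · intro p hp
      rcases mem_insert.1 hp with rfl | hp
      · exact admissibleAt_filter_not_dvd hq S u v m
      · exact (hadm p hp).mono (filter_subset _ _)

end Sieve

/-- Lemma 2.1: there is an absolute constant `C > 0` such that among any `s ≥ 5`
pairwise distinct linear functions `u_i n + v_i` with `u_i ≥ 1` and `gcd(u_i, v_i) = 1`
one can find at least `C·s/log s` of them forming an admissible set of linear
functions (for each prime `p` some integer `m` makes `p ∤ ∏ (u_i m + v_i)`). -/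
theorem stmt_2 :
    ∃ C : ℝ, 0 < C ∧ ∀ s : ℕ, 5 ≤ s → ∀ u v : ℕ → ℤ,
      (∀ i ∈ Finset.Icc 1 s, 1 ≤ u i) →
      (∀ i ∈ Finset.Icc 1 s, Int.gcd (u i) (v i) = 1) →
      (∀ i ∈ Finset.Icc 1 s, ∀ j ∈ Finset.Icc 1 s, u i = u j → v i = v j → i = j) →
      ∃ S : Finset ℕ, S ⊆ Finset.Icc 1 s ∧ C * s / Real.log s ≤ (S.card : ℝ) ∧
        ∀ p : ℕ, p.Prime → ∃ m : ℤ, ¬ ((p : ℤ) ∣ ∏ i ∈ S, (u i * m + v i)) := by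
  refine ⟨exp (-8), exp_pos _, fun s hs u v _ huv _ ↦ ?_⟩
  obtain ⟨S, hST, hcard, hsmall⟩ := exists_large_subset_admissibleAt (Icc 1 s) huv
    (primesLE s) fun p ↦ Nat.prime_of_mem_primesLE
  refine ⟨S, hST, ?_, fun p hp ↦ ?_⟩
  · calc exp (-8) * s / log s = s * (exp (-8) / log s) := by ring
      _ ≤ #(Icc 1 s) * ∏ p ∈ primesLE s, (1 - 1 / (p : ℝ)) := by
        rw [Nat.card_Icc, Nat.add_sub_cancel]
        exact mul_le_mul_of_nonneg_left (exp_neg_div_log_le_prod_one_sub_inv (by omega))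
          (Nat.cast_nonneg s)
      _ ≤ #S := hcard
  · by_cases hps : p ≤ s
    · exact hsmall p (Nat.mem_primesLE.2 ⟨hps, hp⟩)
    · refine admissibleAt_of_card_lt hp ?_ fun i hi ↦ huv i (hST hi)
      calc #S ≤ #(Icc 1 s) := card_le_card hST
        _ < p := by rw [Nat.card_Icc]; omega
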